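/- Let m be a positive even number, let K be a finite set of ordered pairs of elements of Fin m whose components are all pairwise distinct (hence |K| ≤ m/2), and let A ⊆ Fin m be a finite set with |A| ≤ m/2 − 1. Then the Hamming weight of the pointwise product v_A ∧ (M_{Q(K)} v_A) is divisible by 4. -/
import Mathlib


/-- The vector `v_A` : its value at a label `x : Fin m → ZMod 2` is `∏_{a ∈ A} x a`. -/
def vA (m : ℕ) (A : Finset (Fin m)) : (Fin m → ZMod 2) → ZMod 2 :=
  fun x => ∏ a ∈ A, x a

/-- Hamming weight of a vector: the number of labels where it takes value 1. -/
def wt (m : ℕ) (w : (Fin m → ZMod 2) → ZMod 2) : ℕ :=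
  (Finset.univ.filter (fun x => w x = 1)).card

/-- All first and second components of the pairs in `K` are pairwise
distinct. -/
def distinctPairs (m : ℕ) (K : Finset (Fin m × Fin m)) : Prop :=
  (∀ p ∈ K, p.1 ≠ p.2) ∧
  (∀ p ∈ K, ∀ q ∈ K, p ≠ q →
    p.1 ≠ q.1 ∧ p.1 ≠ q.2 ∧ p.2 ≠ q.1 ∧ p.2 ≠ q.2)

/-- The permutation `Q(K)` of the labels: it sends `x` to the label `y` with
`y i = x i + x j` for each `(i,j) ∈ K` and `y l = x l` for all other `l`. -/
def QKmap (m : ℕ) (K : Finset (Fin m × Fin m)) :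
    (Fin m → ZMod 2) → (Fin m → ZMod 2) :=
  fun x l => x l + ∑ p ∈ K.filter (fun p => p.1 = l), x p.2

/-- The set of first components of the pairs of `K`. -/
def F1 (m : ℕ) (K : Finset (Fin m × Fin m)) : Finset (Fin m) := K.image Prod.fst

lemma zmod2_prod_eq_one {ι : Type*} (s : Finset ι) (g : ι → ZMod 2) :
    (∏ a ∈ s, g a) = 1 ↔ ∀ a ∈ s, g a = 1 := by
  constructor
  · intro h a ha
    by_contra hne
    have hz : g a = 0 := by revert hne; generalize g a = z; revert z; decide
    have h0 : (∏ a ∈ s, g a) = 0 := Finset.prod_eq_zero ha hz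
    rw [h0] at h
    exact absurd h (by decide)
  · exact Finset.prod_eq_one

lemma card_fixed (m : ℕ) (B : Finset (Fin m)) (f : Fin m → ZMod 2) :
    (Finset.univ.filter (fun x : Fin m → ZMod 2 => ∀ i ∈ B, x i = f i)).card
      = 2 ^ (m - B.card) := by
  classical
  have := Finset.card_bij'
    (i := fun (x : Fin m → ZMod 2) (_ : x ∈ Finset.univ.filter (fun x => ∀ i ∈ B, x i = f i)) =>
      (fun j : {i // i ∈ Bᶜ} => x j : {i // i ∈ Bᶜ} → ZMod 2))
    (j := fun (g : {i // i ∈ Bᶜ} → ZMod 2) (_ : g ∈ Finset.univ) =>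
      (fun i => if h : i ∈ B then f i else g ⟨i, by simpa using h⟩ : Fin m → ZMod 2))
    (hi := by intro a ha; simp)
    (hj := by
      intro g hg
      simp only [Finset.mem_filter, Finset.mem_univ, true_and]
      intro i hi
      simp [hi])
    (left_inv := by
      intro x hx
      simp only [Finset.mem_filter, Finset.mem_univ, true_and] at hx
      funext i
      by_cases h : i ∈ B
      · simp [h, hx i h]
      · simp [h])
    (right_inv := by
      intro g hg
      funext i
      have : (i : Fin m) ∉ B := Finset.mem_compl.mp i.2
      simp [this])
  rw [this, Finset.card_univ, Fintype.card_fun, Fintype.card_coe,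
    Finset.card_compl, Fintype.card_fin, ZMod.card]

/-- For `|A| ≤ m/2 - 1`, the Hamming weight of the pointwise product
`v_A ∧ (M_{Q(K)} v_A)` (where `M_{Q(K)} v_A = v_A ∘ Q(K)` since `Q(K)` is an
involution) is divisible by 4. -/
theorem stmt13 (m : ℕ) (hm : Even m) (h0 : 0 < m) (K : Finset (Fin m × Fin m))
    (hK : distinctPairs m K) (A : Finset (Fin m)) (hA : A.card ≤ m / 2 - 1) :
    4 ∣ wt m (fun x => vA m A x * vA m A (QKmap m K x)) := by
  classical
  -- characterization of the condition
  have hmul : ∀ a b : ZMod 2, a * b = 1 → a = 1 ∧ b = 1 := by decide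
  have hchar : ∀ x : Fin m → ZMod 2,
      (vA m A x * vA m A (QKmap m K x) = 1) ↔
      ((∀ a ∈ A, x a = 1) ∧ (∀ p ∈ K, p.1 ∈ A → x p.2 = 0)) := by
    intro x
    constructor
    · intro h
      obtain ⟨h1, h2⟩ := hmul _ _ h
      have hx : ∀ a ∈ A, x a = 1 := (zmod2_prod_eq_one A x).mp h1
      have hq : ∀ a ∈ A, QKmap m K x a = 1 :=
        (zmod2_prod_eq_one A (QKmap m K x)).mp h2
      refine ⟨hx, fun p hp hp1 => ?_⟩
      have hfilt : K.filter (fun q => q.1 = p.1) = {p} := by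
        ext q
        simp only [Finset.mem_filter, Finset.mem_singleton]
        constructor
        · rintro ⟨hqK, hq1⟩
          by_contra hne
          exact (hK.2 q hqK p hp hne).1 hq1
        · rintro rfl; exact ⟨hp, rfl⟩
      have := hq p.1 hp1
      rw [QKmap, hfilt, Finset.sum_singleton, hx p.1 hp1] at this
      -- 1 + x p.2 = 1
      have h2' : x p.2 = 0 := by
        have := congrArg (fun z => z + 1) this
        simpa [add_comm, add_assoc] using this
      exact h2'
    · rintro ⟨hx, hz⟩
      have h1 : vA m A x = 1 := (zmod2_prod_eq_one A x).mpr hx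
      have h2 : vA m A (QKmap m K x) = 1 := by
        refine (zmod2_prod_eq_one A _).mpr (fun a ha => ?_)
        have hsum : (∑ p ∈ K.filter (fun p => p.1 = a), x p.2) = 0 := by
          refine Finset.sum_eq_zero (fun p hp => ?_)
          simp only [Finset.mem_filter] at hp
          exact hz p hp.1 (hp.2 ▸ ha)
        rw [QKmap, hsum, hx a ha, add_zero]
      rw [h1, h2, mul_one]
  by_cases hconf : ∃ p ∈ K, p.1 ∈ A ∧ p.2 ∈ A
  · -- the set is empty
    obtain ⟨p, hp, hp1, hp2⟩ := hconf
    have : wt m (fun x => vA m A x * vA m A (QKmap m K x)) = 0 := by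
      rw [wt, Finset.card_eq_zero]
      rw [Finset.filter_eq_empty_iff]
      intro x _
      intro h
      obtain ⟨hx, hz⟩ := (hchar x).mp h
      have := hz p hp hp1
      rw [hx p.2 hp2] at this
      exact one_ne_zero this
    simp [this]
  · push_neg at hconf
    set S : Finset (Fin m) := (K.filter (fun p => p.1 ∈ A)).image Prod.snd with hS
    set B : Finset (Fin m) := A ∪ S with hB
    set f : Fin m → ZMod 2 := fun i => if i ∈ A then 1 else 0 with hf
    have hchar2 : ∀ x : Fin m → ZMod 2,
        (vA m A x * vA m A (QKmap m K x) = 1) ↔ (∀ i ∈ B, x i = f i) := by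
      intro x
      rw [hchar]
      constructor
      · rintro ⟨hx, hz⟩ i hi
        rcases Finset.mem_union.mp hi with hiA | hiS
        · rw [hx i hiA, hf]; simp [hiA]
        · obtain ⟨p, hp, rfl⟩ := Finset.mem_image.mp hiS
          simp only [Finset.mem_filter] at hp
          have hnA : p.2 ∉ A := fun h => hconf p hp.1 hp.2 h
          rw [hz p hp.1 hp.2, hf]; simp [hnA]
      · intro h
        constructor
        · intro a ha
          have := h a (Finset.mem_union_left _ ha)
          rw [this]; simp [hf, ha]
        · intro p hp hp1
          have hmem : p.2 ∈ S := Finset.mem_image.mpr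
            ⟨p, Finset.mem_filter.mpr ⟨hp, hp1⟩, rfl⟩
          have hnA : p.2 ∉ A := fun h => hconf p hp hp1 h
          have := h p.2 (Finset.mem_union_right _ hmem)
          rw [this]; simp [hf, hnA]
    have hwt : wt m (fun x => vA m A x * vA m A (QKmap m K x)) = 2 ^ (m - B.card) := by
      rw [wt, ← card_fixed m B f]
      congr 1
      apply Finset.filter_congr
      intro x _
      simpa using hchar2 x
    rw [hwt]
    -- bound on B.card
    have hScard : S.card ≤ A.card := by
      calc S.card ≤ (K.filter (fun p => p.1 ∈ A)).card := Finset.card_image_le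
        _ ≤ A.card := by
          apply Finset.card_le_card_of_injOn Prod.fst
          · intro p hp; exact (Finset.mem_filter.mp hp).2
          · intro p hp q hq hpq
            by_contra hne
            exact (hK.2 p (Finset.mem_filter.mp hp).1 q (Finset.mem_filter.mp hq).1 hne).1 hpq
    have hBcard : B.card ≤ m - 2 := by
      have h1 : B.card ≤ A.card + S.card := Finset.card_union_le A S
      obtain ⟨k, hk⟩ := hm
      omega
    have h2 : 2 ≤ m - B.card := by
      obtain ⟨k, hk⟩ := hm
      have : B.card ≤ m := by
        calc B.card ≤ (Finset.univ : Finset (Fin m)).card := Finset.card_le_card (Finset.subset_univ B)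
          _ = m := by simp
      omega
    calc (4 : ℕ) = 2 ^ 2 := by norm_num
      _ ∣ 2 ^ (m - B.card) := pow_dvd_pow 2 h2
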